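/- arXiv:2009.00177 — 3 statements merged into one kernel-verified Lean document; each statement's English description precedes it below -/
import Mathlib

section
/- Let R be a commutative ring, J an ideal of R, m ≥ 1 a natural number, and g : R →+* R a ring homomorphism such that g(x) - x ∈ J^m for all x ∈ R. Then for every k ≥ 1 and every a ∈ J^k, we have g(a) - a ∈ J^{k+m-1}. -/
theorem stmt3 {R : Type*} [CommRing R] (J : Ideal R) (m : ℕ) (hm : 1 ≤ m)
    (g : R →+* R) (hg : ∀ x : R, g x - x ∈ J ^ m) :
    ∀ k : ℕ, 1 ≤ k → ∀ a ∈ J ^ k, g a - a ∈ J ^ (k + m - 1) := by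
  intro k hk
  induction k, hk using Nat.le_induction with
  | base =>
    intro a _
    have : 1 + m - 1 = m := by omega
    rw [this]
    exact hg a
  | succ k hk ih =>
    have hkm : k + 1 + m - 1 = k + m := by omega
    rw [hkm]
    intro a ha
    rw [pow_succ] at ha
    refine Submodule.mul_induction_on ha ?_ ?_
    · intro x hx y hy
      have h1 : g x - x ∈ J ^ (k + m - 1) := ih x hx
      have h2 : g y - y ∈ J ^ m := hg y
      have hgy : g y ∈ J := by
        have h3 : g y - y ∈ J := Ideal.pow_le_self (by omega) h2
        have h4 := Ideal.add_mem J hy h3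
        simpa using h4
      have key : g (x * y) - x * y = (g x - x) * g y + x * (g y - y) := by
        rw [map_mul]; ring
      rw [key]
      refine Ideal.add_mem _ ?_ ?_
      · have : (g x - x) * g y ∈ J ^ (k + m - 1) * J := Ideal.mul_mem_mul h1 hgy
        have hpow : J ^ (k + m - 1) * J = J ^ (k + m) := by
          rw [← pow_succ]
          congr 1
          omega
        rwa [hpow] at this
      · have : x * (g y - y) ∈ J ^ k * J ^ m := Ideal.mul_mem_mul hx h2
        rwa [← pow_add] at this
    · intro x y hx hy
      have : g (x + y) - (x + y) = (g x - x) + (g y - y) := by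
        rw [map_add]; ring
      rw [this]
      exact Ideal.add_mem _ hx hy
end

section
/- Let R be a commutative ring, J an ideal, m ≥ 1, and g, h : R →+* R ring homomorphisms with g(x) - x ∈ J^m and h(x) - x ∈ J^m for all x ∈ R. Then for all x ∈ R, g(h(x)) - h(g(x)) ∈ J^{2m-1}. -/
lemma aux4 {R : Type*} [CommRing R] (J : Ideal R) (m : ℕ) (hm : 1 ≤ m)
    (g : R →+* R) (hg : ∀ x : R, g x - x ∈ J ^ m) :
    ∀ k : ℕ, ∀ y ∈ J ^ k, g y - y ∈ J ^ (k + m - 1) := by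
  intro k
  induction k with
  | zero =>
    intro y _
    exact Ideal.pow_le_pow_right (by omega) (hg y)
  | succ k ih =>
    intro y hy
    rw [pow_succ] at hy
    have htarget : (k + 1) + m - 1 = k + m := by omega
    rw [htarget]
    refine Submodule.mul_induction_on hy ?_ ?_
    · intro a ha b hb
      have h1 : g a * g b - a * b = (g a - a) * g b + a * (g b - b) := by ring
      have hgb : g b ∈ J := by
        have : g b - b ∈ J := by simpa using Ideal.pow_le_pow_right hm (hg b)
        have := J.add_mem this hb
        simpa using this
      have t1 : (g a - a) * g b ∈ J ^ (k + m) := by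
        have := ih a ha
        have h2 : J ^ (k + m - 1) * J ≤ J ^ (k + m) := by
          rw [← pow_succ]
          exact Ideal.pow_le_pow_right (by omega)
        exact h2 (Ideal.mul_mem_mul this hgb)
      have t2 : a * (g b - b) ∈ J ^ (k + m) := by
        have : J ^ k * J ^ m ≤ J ^ (k + m) := by rw [← pow_add]
        exact this (Ideal.mul_mem_mul ha (hg b))
      have := Ideal.add_mem _ t1 t2
      simpa [map_mul, h1] using this
    · intro x y hx' hy'
      have := Ideal.add_mem _ hx' hy'
      have heq : g (x + y) - (x + y) = (g x - x) + (g y - y) := by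
        rw [map_add]; ring
      rw [heq]; exact this

theorem stmt4 {R : Type*} [CommRing R] (J : Ideal R) (m : ℕ) (hm : 1 ≤ m)
    (g h : R →+* R) (hg : ∀ x : R, g x - x ∈ J ^ m) (hh : ∀ x : R, h x - x ∈ J ^ m) :
    ∀ x : R, g (h x) - h (g x) ∈ J ^ (2 * m - 1) := by
  intro x
  have h1 : g (h x - x) - (h x - x) ∈ J ^ (m + m - 1) := aux4 J m hm g hg m _ (hh x)
  have h2 : h (g x - x) - (g x - x) ∈ J ^ (m + m - 1) := aux4 J m hm h hh m _ (hg x)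
  have key : g (h x) - h (g x)
      = (g (h x - x) - (h x - x)) - (h (g x - x) - (g x - x)) := by
    rw [map_sub, map_sub]; ring
  rw [key, show 2 * m - 1 = m + m - 1 by omega]
  exact Ideal.sub_mem _ h1 h2
end

section
/- Let R be a commutative ring, J an ideal, m ≥ 1, and g : R →+* R a ring homomorphism with g(x) - x ∈ J^m for all x ∈ R. Define the additive map f : R → R by f(x) = g(x) - x. Then for every ℓ ≥ 1, the ℓ-fold composite f^{∘ℓ} satisfies f^{∘ℓ}(x) ∈ J^{ℓ(m-1)+1} for all x ∈ R. -/
theorem stmt17_aux {R : Type*} [CommRing R] (J : Ideal R) (m : ℕ) (hm : 1 ≤ m)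
    (g : R →+* R) (hg : ∀ x : R, g x - x ∈ J ^ m) :
    ∀ k : ℕ, ∀ y ∈ J ^ k, g y - y ∈ J ^ (k + (m - 1)) := by
  intro k
  induction k with
  | zero =>
    intro y _
    simpa using Ideal.pow_le_pow_right (by omega : m - 1 ≤ m) (hg y)
  | succ k ih =>
    intro y hy
    rw [pow_succ'] at hy
    have hk1 : k + 1 + (m - 1) = 1 + (k + (m - 1)) := by omega
    rw [hk1, pow_add, pow_one]
    refine Submodule.smul_induction_on hy ?_ ?_
    · intro a ha b hb
      have h1 : g a ∈ J := by
        have := J.add_mem ha ((pow_one J ▸ Ideal.pow_le_pow_right hm (hg a)) : g a - a ∈ J)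
        simpa using this
      have key : g (a * b) - a * b = g a * (g b - b) + (g a - a) * b := by
        rw [map_mul]; ring
      rw [smul_eq_mul, key]
      refine Submodule.add_mem _ (Ideal.mul_mem_mul h1 (ih b hb)) ?_
      have h2 : (g a - a) * b ∈ J ^ m * J ^ k := Ideal.mul_mem_mul (hg a) hb
      rw [← pow_add] at h2
      have hle : J ^ (m + k) ≤ J * J ^ (k + (m - 1)) := by
        rw [← pow_succ']
        exact Ideal.pow_le_pow_right (by omega)
      exact hle h2
    · intro a b ha hb
      have : g (a + b) - (a + b) = (g a - a) + (g b - b) := by rw [map_add]; ring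
      rw [this]; exact Submodule.add_mem _ ha hb

theorem stmt17 {R : Type*} [CommRing R] (J : Ideal R) (m : ℕ) (hm : 1 ≤ m)
    (g : R →+* R) (hg : ∀ x : R, g x - x ∈ J ^ m) :
    ∀ ℓ : ℕ, 1 ≤ ℓ → ∀ x : R, (fun y : R => g y - y)^[ℓ] x ∈ J ^ (ℓ * (m - 1) + 1) := by
  intro ℓ hℓ
  induction ℓ with
  | zero => omega
  | succ ℓ ih =>
    intro x
    rcases Nat.eq_zero_or_pos ℓ with h0 | hpos
    · subst h0
      simpa using Ideal.pow_le_pow_right (by omega : 1 * (m - 1) + 1 ≤ m) (hg x)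
    · rw [Function.iterate_succ_apply']
      have h1 := stmt17_aux J m hm g hg _ _ (ih hpos x)
      have : (ℓ + 1) * (m - 1) + 1 = ℓ * (m - 1) + 1 + (m - 1) := by
        rw [add_mul]; omega
      rw [this]
      exact h1
end
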